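/- arXiv:1504.01418 — 2 statements merged into one kernel-verified Lean document; each statement's English description precedes it below -/
import Mathlib

section
/- Let U, V : ℝ^D → ℝ be measurable functions such that exp(−U) and exp(−V) are integrable with positive integrals, and suppose ‖U − V‖_∞ = sup_q |U(q) − V(q)| is finite. Define the probability densities P(q) = exp(−U(q))/I_P and Q(q) = exp(−V(q))/I_Q, where I_P = ∫ exp(−U(q)) dq and I_Q = ∫ exp(−V(q)) dq. Then the Kullback–Leibler divergence satisfies D_KL(P‖Q) ≤ 2‖U − V‖_∞. -/
/-!
Write `Z_U = ∫ exp (-U)` and `Z_V = ∫ exp (-V)`, and let `M` bound `|U - V|`. Then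
`log (P / Q) = (V - U) + (log Z_V - log Z_U)`, and comparing the integrands `exp (-U)` and
`exp (-V)` pointwise gives `|log Z_V - log Z_U| ≤ M`. Hence `|log (P / Q)| ≤ 2 M` everywhere,
and averaging against the probability density `P` gives `D_KL(P‖Q) ≤ 2 M`.
-/

open MeasureTheory Real

variable {α : Type*} [MeasurableSpace α] {μ : Measure α}

noncomputable def gibbsDensity (μ : Measure α) (U : α → ℝ) (x : α) : ℝ :=
  exp (-U x) / ∫ y, exp (-U y) ∂μ

lemma integral_mul_le_of_abs_le {p f : α → ℝ} {C : ℝ} (hp : Integrable p μ) (hp0 : ∀ x, 0 ≤ p x)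
    (hp1 : ∫ x, p x ∂μ = 1) (hf : AEStronglyMeasurable f μ) (hfC : ∀ x, |f x| ≤ C) :
    ∫ x, p x * f x ∂μ ≤ C := by
  have hpf : Integrable (fun x => p x * f x) μ := by
    refine (hp.mul_const C).mono (hp.aestronglyMeasurable.mul hf) (.of_forall fun x => ?_)
    rw [norm_mul, norm_mul, norm_of_nonneg (hp0 x), norm_eq_abs]
    exact mul_le_mul_of_nonneg_left ((hfC x).trans (le_abs_self C)) (hp0 x)
  calc ∫ x, p x * f x ∂μ ≤ ∫ x, p x * C ∂μ :=
        integral_mono hpf (hp.mul_const C) fun x =>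
          mul_le_mul_of_nonneg_left ((le_abs_self _).trans (hfC x)) (hp0 x)
    _ = C := by rw [integral_mul_const, hp1, one_mul]

section Gibbs

variable {U V : α → ℝ} {M : ℝ}

lemma gibbsDensity_nonneg (x : α) : 0 ≤ gibbsDensity μ U x :=
  div_nonneg (exp_nonneg _) (integral_nonneg fun _ => exp_nonneg _)

lemma MeasureTheory.Integrable.gibbsDensity (hU : Integrable (fun x => exp (-U x)) μ) :
    Integrable (gibbsDensity μ U) μ :=
  hU.div_const _

lemma integral_gibbsDensity (hZ : ∫ x, exp (-U x) ∂μ ≠ 0) : ∫ x, gibbsDensity μ U x ∂μ = 1 := by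
  simp only [gibbsDensity, integral_div, div_self hZ]

lemma integral_exp_neg_le_exp_mul (hU : Integrable (fun x => exp (-U x)) μ)
    (hV : Integrable (fun x => exp (-V x)) μ) (hUV : ∀ x, U x - V x ≤ M) :
    ∫ x, exp (-V x) ∂μ ≤ exp M * ∫ x, exp (-U x) ∂μ := by
  rw [← integral_const_mul]
  refine integral_mono hV (hU.const_mul _) fun x => ?_
  rw [← exp_add]
  exact exp_le_exp.2 (by linarith [hUV x])

lemma log_integral_exp_neg_sub_le (hU : Integrable (fun x => exp (-U x)) μ)
    (hV : Integrable (fun x => exp (-V x)) μ) (hZU : 0 < ∫ x, exp (-U x) ∂μ)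
    (hZV : 0 < ∫ x, exp (-V x) ∂μ) (hUV : ∀ x, U x - V x ≤ M) :
    log (∫ x, exp (-V x) ∂μ) - log (∫ x, exp (-U x) ∂μ) ≤ M := by
  have h := log_le_log hZV (integral_exp_neg_le_exp_mul hU hV hUV)
  rw [log_mul (exp_ne_zero _) hZU.ne', log_exp] at h
  linarith

lemma abs_log_integral_exp_neg_sub_le (hU : Integrable (fun x => exp (-U x)) μ)
    (hV : Integrable (fun x => exp (-V x)) μ) (hZU : 0 < ∫ x, exp (-U x) ∂μ)
    (hZV : 0 < ∫ x, exp (-V x) ∂μ) (hUV : ∀ x, |U x - V x| ≤ M) :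
    |log (∫ x, exp (-V x) ∂μ) - log (∫ x, exp (-U x) ∂μ)| ≤ M :=
  abs_sub_le_iff.2
    ⟨log_integral_exp_neg_sub_le hU hV hZU hZV fun x => (abs_sub_le_iff.1 (hUV x)).1,
      log_integral_exp_neg_sub_le hV hU hZV hZU fun x => (abs_sub_le_iff.1 (hUV x)).2⟩

lemma log_gibbsDensity_div (hZU : ∫ x, exp (-U x) ∂μ ≠ 0) (hZV : ∫ x, exp (-V x) ∂μ ≠ 0)
    (x : α) :
    log (gibbsDensity μ U x / gibbsDensity μ V x) =
      V x - U x + (log (∫ y, exp (-V y) ∂μ) - log (∫ y, exp (-U y) ∂μ)) := by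
  rw [gibbsDensity, gibbsDensity,
    log_div (div_ne_zero (exp_ne_zero _) hZU) (div_ne_zero (exp_ne_zero _) hZV),
    log_div (exp_ne_zero _) hZU, log_div (exp_ne_zero _) hZV, log_exp, log_exp]
  ring

lemma abs_log_gibbsDensity_div_le (hU : Integrable (fun x => exp (-U x)) μ)
    (hV : Integrable (fun x => exp (-V x)) μ) (hZU : 0 < ∫ x, exp (-U x) ∂μ)
    (hZV : 0 < ∫ x, exp (-V x) ∂μ) (hUV : ∀ x, |U x - V x| ≤ M) (x : α) :
    |log (gibbsDensity μ U x / gibbsDensity μ V x)| ≤ 2 * M := by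
  rw [log_gibbsDensity_div hZU.ne' hZV.ne']
  calc _ ≤ |V x - U x| + |log (∫ y, exp (-V y) ∂μ) - log (∫ y, exp (-U y) ∂μ)| :=
        abs_add_le _ _
    _ ≤ M + M := add_le_add (abs_sub_comm (V x) (U x) ▸ hUV x)
        (abs_log_integral_exp_neg_sub_le hU hV hZU hZV hUV)
    _ = 2 * M := by ring

theorem integral_gibbsDensity_mul_log_div_le (hU : Integrable (fun x => exp (-U x)) μ)
    (hV : Integrable (fun x => exp (-V x)) μ) (hZU : 0 < ∫ x, exp (-U x) ∂μ)
    (hZV : 0 < ∫ x, exp (-V x) ∂μ) (hUV : ∀ x, |U x - V x| ≤ M) :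
    ∫ x, gibbsDensity μ U x * log (gibbsDensity μ U x / gibbsDensity μ V x) ∂μ ≤ 2 * M :=
  integral_mul_le_of_abs_le hU.gibbsDensity gibbsDensity_nonneg (integral_gibbsDensity hZU.ne')
    ((hU.gibbsDensity.aemeasurable.div hV.gibbsDensity.aemeasurable).log.aestronglyMeasurable)
    (abs_log_gibbsDensity_div_le hU hV hZU hZV hUV)

end Gibbs

theorem kl_le_two_sup_norm_general (D : ℕ) (U V : (Fin D → ℝ) → ℝ)
    (hUi : Integrable (fun q => exp (-U q)))
    (hVi : Integrable (fun q => exp (-V q)))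
    (hIP : 0 < ∫ q, exp (-U q))
    (hIQ : 0 < ∫ q, exp (-V q))
    (hbdd : BddAbove (Set.range fun q => |U q - V q|))
    (P Q : (Fin D → ℝ) → ℝ)
    (hP : P = fun q => exp (-U q) / ∫ q', exp (-U q'))
    (hQ : Q = fun q => exp (-V q) / ∫ q', exp (-V q')) :
    ∫ q, P q * log (P q / Q q) ≤ 2 * ⨆ q, |U q - V q| := by
  subst hP hQ
  exact integral_gibbsDensity_mul_log_div_le hUi hVi hIP hIQ (le_ciSup hbdd)

/-- Theorem (paper, Thm 1): for Gibbs densities `P ∝ exp (-U)` and `Q ∝ exp (-V)`,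
the Kullback–Leibler divergence satisfies `D_KL(P‖Q) ≤ 2 * ‖U - V‖_∞`. -/
theorem kl_le_two_sup_norm (D : ℕ) (U V : (Fin D → ℝ) → ℝ)
    (hU : Measurable U) (hV : Measurable V)
    (hUi : Integrable (fun q => exp (-U q)))
    (hVi : Integrable (fun q => exp (-V q)))
    (hIP : 0 < ∫ q, exp (-U q))
    (hIQ : 0 < ∫ q, exp (-V q))
    (hbdd : BddAbove (Set.range fun q => |U q - V q|))
    (P Q : (Fin D → ℝ) → ℝ)
    (hP : P = fun q => exp (-U q) / ∫ q', exp (-U q'))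
    (hQ : Q = fun q => exp (-V q) / ∫ q', exp (-V q')) :
    ∫ q, P q * log (P q / Q q) ≤ 2 * ⨆ q, |U q - V q| :=
  kl_le_two_sup_norm_general D U V hUi hVi hIP hIQ hbdd P Q hP hQ
end

section
/- Fix d ≥ 1 and for each coordinate k ∈ {1, …, d} let (u_k(i))_{i ≥ 0} be a sequence of real numbers with u_k(0) = 0, and define the differences δ_k(i) = u_k(i) − u_k(i − 1) for i ≥ 1. Then for every integer q ≥ d, ∑_{i ∈ ℕ_{≥1}^d, i₁ + ⋯ + i_d ≤ q} ∏_{k=1}^d δ_k(i_k) = ∑_{i ∈ ℕ_{≥1}^d, q − d + 1 ≤ i₁ + ⋯ + i_d ≤ q} (−1)^{q − (i₁ + ⋯ + i_d)} · C(d − 1, q − (i₁ + ⋯ + i_d)) · ∏_{k=1}^d u_k(i_k), where C(·,·) is the binomial coefficient. -/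
/-!
Encode each sequence by its generating function `Uₖ = ∑ᵢ uₖ(i) Xⁱ`. Since `uₖ(0) = 0`, the
differences have generating function `(1 - X) Uₖ`, and summing the coefficients of degree `≤ q`
is taking the coefficient of `X^q` after multiplying by `1 / (1 - X)`. Both sides are therefore
the coefficient of `X^q` in `(1 - X)^(d - 1) ∏ₖ Uₖ`: the left side after expanding the product of
the differences, the right side after expanding `(1 - X)^(d - 1)` binomially.
-/

open Finset PowerSeries

section

variable {R ι : Type*} [Fintype ι]

theorem PowerSeries.coeff_one_sub_X_pow [CommRing R] (m n : ℕ) :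
    coeff n ((1 - X : R⟦X⟧) ^ m) = (-1) ^ n * m.choose n := by
  induction m generalizing n with
  | zero => cases n <;> simp
  | succ m ih =>
    cases n with
    | zero => simp
    | succ n =>
      rw [pow_succ, mul_sub, mul_one, map_sub, coeff_succ_mul_X, ih, ih, Nat.choose_succ_succ']
      push_cast
      ring

theorem PowerSeries.mk_sub_shift [Ring R] (f : ℕ → R) (h : f 0 = 0) :
    PowerSeries.mk (fun i => f i - f (i - 1)) = (1 - X) * PowerSeries.mk f := by
  ext (_ | n) <;> simp [sub_mul, h]

theorem one_le_of_prod_ne_zero [CommMonoidWithZero R] {f : ι → ℕ → R} (hf : ∀ k, f k 0 = 0)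
    {i : ι → ℕ} (h : ∏ k, f k (i k) ≠ 0) (k : ι) : 1 ≤ i k := by
  by_contra hk
  exact h (prod_eq_zero (mem_univ k) (by rw [Nat.lt_one_iff.mp (not_le.mp hk), hf]))

theorem Finset.sum_filter_and_of_ne {α M : Type*} [AddCommMonoid M] {s : Finset α}
    {p r : α → Prop} [DecidablePred p] [DecidablePred r] {f : α → M}
    (h : ∀ x ∈ s, r x → f x ≠ 0 → p x) :
    ∑ x ∈ s with p x ∧ r x, f x = ∑ x ∈ s with r x, f x := by
  rw [← sum_filter_of_ne (s := s.filter r) (p := p) fun x hx => h x (mem_filter.1 hx).1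
    (mem_filter.1 hx).2, filter_filter]
  simp only [and_comm]

variable [DecidableEq ι]

theorem PowerSeries.coeff_prod_mk_eq_sum_fin [CommSemiring R] (f : ι → ℕ → R) {n q : ℕ}
    (hn : n ≤ q) :
    coeff n (∏ k, PowerSeries.mk (f k)) =
      ∑ i ∈ univ.filter (fun i : ι → Fin (q + 1) => ∑ k, (i k : ℕ) = n), ∏ k, f k (i k) := by
  have hlt : ∀ l ∈ finsuppAntidiag (univ : Finset ι) n, ∀ k, l k < q + 1 := fun l hl k =>
    calc l k ≤ ∑ j, l j := single_le_sum (fun j _ => Nat.zero_le (l j)) (mem_univ k)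
      _ = n := (mem_finsuppAntidiag.1 hl).1
      _ < q + 1 := Nat.lt_succ_of_le hn
  rw [coeff_prod]
  simp only [coeff_mk]
  refine sum_bij' (fun l hl k => ⟨l k, hlt l hl k⟩)
    (fun i _ => Finsupp.equivFunOnFinite.symm fun k => (i k : ℕ)) ?_ ?_ ?_ ?_ ?_
  · intro l hl
    simpa using (mem_finsuppAntidiag.1 hl).1
  · intro i hi
    simpa [mem_finsuppAntidiag] using hi
  · intro l _
    ext k
    simp
  · intro i _
    ext k
    simp
  · intro l _
    simp

theorem sum_weight_le_eq_sum_range [AddCommMonoid R] (q : ℕ) (g : ℕ → (ι → Fin (q + 1)) → R) :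
    ∑ i ∈ univ.filter (fun i : ι → Fin (q + 1) => ∑ k, (i k : ℕ) ≤ q), g (∑ k, (i k : ℕ)) i =
      ∑ n ∈ range (q + 1),
        ∑ i ∈ univ.filter (fun i : ι → Fin (q + 1) => ∑ k, (i k : ℕ) = n), g n i := by
  rw [← sum_fiberwise_of_maps_to (g := fun i : ι → Fin (q + 1) => ∑ k, (i k : ℕ))
    (t := range (q + 1)) fun i hi => by simpa [Nat.lt_succ_iff] using hi]
  refine sum_congr rfl fun n hn => ?_
  rw [filter_filter]
  refine sum_congr (filter_congr fun i _ => ?_) fun i hi => ?_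
  · have := mem_range.1 hn
    omega
  · rw [(mem_filter.1 hi).2]

theorem sum_weight_le_mul_prod_eq_sum_coeff [CommSemiring R] (q : ℕ) (ψ : ℕ → R)
    (f : ι → ℕ → R) :
    ∑ i ∈ univ.filter (fun i : ι → Fin (q + 1) => ∑ k, (i k : ℕ) ≤ q),
        ψ (∑ k, (i k : ℕ)) * ∏ k, f k (i k) =
      ∑ n ∈ range (q + 1), ψ n * coeff n (∏ k, PowerSeries.mk (f k)) := by
  refine (sum_weight_le_eq_sum_range q fun s i => ψ s * ∏ k, f k (i k)).trans ?_
  refine sum_congr rfl fun n hn => ?_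
  rw [coeff_prod_mk_eq_sum_fin f (Nat.lt_succ_iff.1 (mem_range.1 hn)), mul_sum]

end

theorem smolyak_formula_general (d q : ℕ) (hd : 1 ≤ d)
    (u : Fin d → ℕ → ℝ) (hu : ∀ k, u k 0 = 0) :
    ∑ i ∈ Finset.univ.filter (fun i : Fin d → Fin (q + 1) =>
          (∀ k, 1 ≤ (i k : ℕ)) ∧ ∑ k, (i k : ℕ) ≤ q),
        ∏ k, (u k (i k) - u k ((i k : ℕ) - 1))
      =
      ∑ i ∈ Finset.univ.filter (fun i : Fin d → Fin (q + 1) =>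
          (∀ k, 1 ≤ (i k : ℕ)) ∧ q - d + 1 ≤ ∑ k, (i k : ℕ) ∧ ∑ k, (i k : ℕ) ≤ q),
        (-1 : ℝ) ^ (q - ∑ k, (i k : ℕ)) * ((d - 1).choose (q - ∑ k, (i k : ℕ)) : ℝ) *
          ∏ k, u k (i k) := by
  set δ : Fin d → ℕ → ℝ := fun k i => u k i - u k (i - 1)
  set U : Fin d → ℝ⟦X⟧ := fun k => PowerSeries.mk (u k)
  rw [sum_filter_and_of_ne fun i _ _ h => one_le_of_prod_ne_zero (f := δ) (fun _ => sub_self _) h]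
  simp only [← and_assoc]
  rw [sum_filter_and_of_ne fun i _ hiq h => ?support]
  case support =>
    have hpos := one_le_of_prod_ne_zero hu (right_ne_zero_of_mul h)
    have hd_le : d ≤ ∑ k, (i k : ℕ) := by
      simpa using card_nsmul_le_sum univ (fun k => (i k : ℕ)) 1 fun k _ => hpos k
    have hchoose := Nat.choose_eq_zero_iff.not.1
      (Nat.cast_ne_zero.1 (right_ne_zero_of_mul (left_ne_zero_of_mul h)))
    exact ⟨hpos, by omega⟩
  have hΔ : ∏ k, PowerSeries.mk (δ k) = (1 - X) * (1 - X) ^ (d - 1) * ∏ k, U k := by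
    rw [← pow_succ', Nat.sub_add_cancel hd]
    calc ∏ k, PowerSeries.mk (δ k) = ∏ k, ((1 - X) * U k) :=
          prod_congr rfl fun k _ => mk_sub_shift _ (hu k)
      _ = (1 - X) ^ d * ∏ k, U k := by
          rw [prod_mul_distrib, prod_const, card_univ, Fintype.card_fin]
  calc _ = ∑ n ∈ range (q + 1), coeff n (∏ k, PowerSeries.mk (δ k)) := by
        simpa using sum_weight_le_mul_prod_eq_sum_coeff q (fun _ => (1 : ℝ)) δ
    _ = coeff q ((∏ k, PowerSeries.mk (δ k)) * PowerSeries.mk 1) := by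
        simp [coeff_mul, Nat.sum_antidiagonal_eq_sum_range_succ_mk]
    _ = coeff q ((∏ k, U k) * (1 - X) ^ (d - 1)) := by
        rw [hΔ]
        congr 1
        linear_combination (∏ k, U k) * (1 - X) ^ (d - 1) * mk_one_mul_one_sub_eq_one ℝ
    _ = _ := by
        rw [sum_weight_le_mul_prod_eq_sum_coeff q
          (fun s => (-1 : ℝ) ^ (q - s) * ((d - 1).choose (q - s) : ℝ)) u,
          coeff_mul, Nat.sum_antidiagonal_eq_sum_range_succ_mk]
        refine sum_congr rfl fun n _ => ?_
        rw [coeff_one_sub_X_pow]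
        ring

/-- The combinatorial identity underlying Smolyak's sparse grid formula: with
`u k 0 = 0` and differences `δ k i = u k i - u k (i-1)`,
`∑_{|i| ≤ q, i ≥ 1} ∏ₖ δ k (iₖ)
  = ∑_{q-d+1 ≤ |i| ≤ q, i ≥ 1} (-1)^(q-|i|) C(d-1, q-|i|) ∏ₖ u k (iₖ)`. -/
theorem smolyak_formula (d q : ℕ) (hd : 1 ≤ d) (hdq : d ≤ q)
    (u : Fin d → ℕ → ℝ) (hu : ∀ k, u k 0 = 0) :
    ∑ i ∈ Finset.univ.filter (fun i : Fin d → Fin (q + 1) =>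
          (∀ k, 1 ≤ (i k : ℕ)) ∧ ∑ k, (i k : ℕ) ≤ q),
        ∏ k, (u k (i k) - u k ((i k : ℕ) - 1))
      =
      ∑ i ∈ Finset.univ.filter (fun i : Fin d → Fin (q + 1) =>
          (∀ k, 1 ≤ (i k : ℕ)) ∧ q - d + 1 ≤ ∑ k, (i k : ℕ) ∧ ∑ k, (i k : ℕ) ≤ q),
        (-1 : ℝ) ^ (q - ∑ k, (i k : ℕ)) * ((d - 1).choose (q - ∑ k, (i k : ℕ)) : ℝ) *
          ∏ k, u k (i k) :=
  smolyak_formula_general d q hd u hu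
end
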